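/- Let k* = (k_i*)_{i=1}^n be a degree sequence, let x_i* > 0 be positive reals such that p_ij* = x_i* x_j*/(1 + x_i* x_j*) satisfies Σ_{j≠i} p_ij* = k_i* for all i, and let G* be any graph on n vertices whose degree sequence equals k*. Then log P_can(G*) = −H(p*), where H(p*) = −Σ_{1≤i<j≤n} [p_ij* log p_ij* + (1−p_ij*) log(1−p_ij*)] is the entropy of the edge probabilities; equivalently, log Π_{1≤i<j≤n} (p_ij*)^{g_ij(G*)}(1−p_ij*)^{1−g_ij(G*)} = Σ_{1≤i<j≤n} [p_ij* log p_ij* + (1−p_ij*) log(1−p_ij*)]. -/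

import Mathlib

open Filter Finset Asymptotics

/-- A simple undirected graph on `n` labelled vertices, given by its adjacency
indicators `g i j ∈ {0,1}` (as `Bool`), symmetric and with no loops. -/
abbrev BoolGraph (n : ℕ) : Type :=
  {g : Fin n → Fin n → Bool // (∀ i j, g i j = g j i) ∧ ∀ i, g i i = false}

noncomputable section

/-- The degree `k_i(G) = Σ_{j ≠ i} g_ij(G)` of vertex `i` in the graph `G`. -/
def degSeq {n : ℕ} (G : BoolGraph n) (i : Fin n) : ℕ :=
  ∑ j ∈ Finset.univ.filter (fun j => j ≠ i), if G.1 i j then 1 else 0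

/-- Canonical connection probabilities `p*_ij = x_i x_j / (1 + x_i x_j)`. -/
def pStar {n : ℕ} (x : Fin n → ℝ) (i j : Fin n) : ℝ := x i * x j / (1 + x i * x j)

/-- The parameters `x` realise the degree sequence `k` as canonical averages:
`Σ_{j ≠ i} p*_ij = k_i` for all `i`. -/
def fitsDegrees {n : ℕ} (x : Fin n → ℝ) (k : Fin n → ℕ) : Prop :=
  ∀ i, ∑ j ∈ Finset.univ.filter (fun j => j ≠ i), pStar x i j = (k i : ℝ)

/-- Canonical ensemble probability
`P_can(G) = Π_{i<j} p_ij^{g_ij(G)} (1-p_ij)^{1-g_ij(G)}`. -/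
def Pcan {n : ℕ} (p : Fin n → Fin n → ℝ) (G : BoolGraph n) : ℝ :=
  ∏ ij ∈ Finset.univ.filter (fun ij : Fin n × Fin n => ij.1 < ij.2),
    if G.1 ij.1 ij.2 then p ij.1 ij.2 else 1 - p ij.1 ij.2

/-- `Ω_k`: the number of graphs with degree sequence `k`. -/
def numGraphs (n : ℕ) (k : Fin n → ℕ) : ℕ :=
  (Finset.univ.filter (fun G : BoolGraph n => degSeq G = k)).card

/-- Microcanonical ensemble: uniform on the graphs with degree sequence `k`. -/
def Pmic {n : ℕ} (k : Fin n → ℕ) (G : BoolGraph n) : ℝ :=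
  if degSeq G = k then ((numGraphs n k : ℝ))⁻¹ else 0

/-- Relative entropy `S_n(P_mic | P_can) = Σ_G P_mic(G) log (P_mic(G)/P_can(G))`. -/
def relEnt (n : ℕ) (k : Fin n → ℕ) (p : Fin n → Fin n → ℝ) : ℝ :=
  ∑ G : BoolGraph n, Pmic k G * Real.log (Pmic k G / Pcan p G)

/-- `f̄_n = (1/(2n)) Σ_{i=1}^n log (k_i (n-1-k_i) / n)`. -/
def fbar (n : ℕ) (k : Fin n → ℕ) : ℝ :=
  (1 / (2 * (n : ℝ))) * ∑ i, Real.log ((k i : ℝ) * ((n : ℝ) - 1 - (k i : ℝ)) / (n : ℝ))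

/-- The canonical covariance matrix `Q` of the degrees:
`q_ij = p_ij (1 - p_ij)` for `i ≠ j` and `q_ii = Σ_{l ≠ i} p_il (1 - p_il)`. -/
def Qmat {n : ℕ} (p : Fin n → Fin n → ℝ) : Matrix (Fin n) (Fin n) ℝ :=
  Matrix.of fun i j =>
    if i = j then ∑ l ∈ Finset.univ.filter (fun l => l ≠ i), p i l * (1 - p i l)
    else p i j * (1 - p i j)

/-- δ-tameness: `δ ≤ p_ij ≤ 1 - δ` for all `i ≠ j`. -/
def deltaTame {n : ℕ} (δ : ℝ) (p : Fin n → Fin n → ℝ) : Prop :=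
  ∀ i j : Fin n, i ≠ j → δ ≤ p i j ∧ p i j ≤ 1 - δ

/-!
The log-likelihood of a graph under independent edge probabilities `p_ij` splits as
`Σ_{i<j} [p_ij log p_ij + (1 - p_ij) log (1 - p_ij)] + Σ_{i<j} (g_ij - p_ij) θ_ij` with log-odds
`θ_ij = log x_i + log x_j`. Since `θ` is additive, the second sum regroups by vertices into
`Σ_i log x_i (k_i(G) - Σ_{j≠i} p_ij)`, which vanishes when `G` has the fitted degrees.
-/

theorem log_ite_eq_add_mul_log_sub (P : Prop) [Decidable P] (p : ℝ) :
    Real.log (if P then p else 1 - p) =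
      p * Real.log p + (1 - p) * Real.log (1 - p) +
        ((if P then 1 else 0) - p) * (Real.log p - Real.log (1 - p)) := by
  split_ifs <;> ring

theorem sum_filter_lt_mul_add_eq_sum_mul_sum_ne {α R : Type*} [LinearOrder α] [Fintype α]
    [CommSemiring R] (c : α → α → R) (hc : ∀ i j, c i j = c j i) (b : α → R) :
    ∑ ij ∈ univ.filter (fun ij : α × α => ij.1 < ij.2), c ij.1 ij.2 * (b ij.1 + b ij.2) =
      ∑ i, b i * ∑ j ∈ univ.filter (fun j => j ≠ i), c i j := by
  have hswap : ∑ i, ∑ j, (if i < j then b j * c i j else 0) =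
      ∑ i, ∑ j, (if j < i then b i * c i j else 0) := by
    rw [sum_comm]
    simp only [hc]
  have hmerge : ∀ i j : α, (if i < j then b i * c i j else 0) + (if j < i then b i * c i j else 0) =
      b i * if j ≠ i then c i j else 0 := fun i j => by
    rcases lt_trichotomy i j with h | rfl | h
    · simp [h, h.ne', h.not_gt]
    · simp
    · simp [h, h.ne, h.not_gt]
  simp only [sum_filter, mul_sum, Fintype.sum_prod_type, ← hmerge, sum_add_distrib, ← hswap]
  simp only [← sum_add_distrib, ← ite_add_zero, mul_comm (c _ _), add_mul]

section pStar

variable {n : ℕ} {x : Fin n → ℝ}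

theorem pStar_comm (x : Fin n → ℝ) (i j : Fin n) : pStar x i j = pStar x j i := by
  rw [pStar, pStar, mul_comm]

theorem pStar_pos (hx : ∀ i, 0 < x i) (i j : Fin n) : 0 < pStar x i j := by
  have := mul_pos (hx i) (hx j)
  unfold pStar; positivity

theorem one_sub_pStar (hx : ∀ i, 0 < x i) (i j : Fin n) :
    1 - pStar x i j = (1 + x i * x j)⁻¹ := by
  have := mul_pos (hx i) (hx j)
  unfold pStar; field_simp; ring

theorem one_sub_pStar_pos (hx : ∀ i, 0 < x i) (i j : Fin n) : 0 < 1 - pStar x i j := by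
  have := mul_pos (hx i) (hx j)
  rw [one_sub_pStar hx]; positivity

theorem log_pStar_sub_log_one_sub_pStar (hx : ∀ i, 0 < x i) (i j : Fin n) :
    Real.log (pStar x i j) - Real.log (1 - pStar x i j) = Real.log (x i) + Real.log (x j) := by
  have := mul_pos (hx i) (hx j)
  rw [← Real.log_div (pStar_pos hx i j).ne' (one_sub_pStar_pos hx i j).ne',
    ← Real.log_mul (hx i).ne' (hx j).ne', one_sub_pStar hx, pStar]
  field_simp

end pStar

theorem cast_degSeq {n : ℕ} (G : BoolGraph n) (i : Fin n) :
    (degSeq G i : ℝ) = ∑ j ∈ univ.filter (fun j => j ≠ i), if G.1 i j then 1 else 0 := by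
  simp [degSeq]

/-- If `G*` realises the degree sequence `k*`, then
`log P_can(G*) = -H(p*)`, i.e.
`log P_can(G*) = Σ_{i<j} [p_ij log p_ij + (1-p_ij) log(1-p_ij)]`. -/
theorem log_Pcan_eq_neg_entropy
    (n : ℕ) (k : Fin n → ℕ) (x : Fin n → ℝ)
    (hxpos : ∀ i, 0 < x i)
    (hfit : fitsDegrees x k)
    (G : BoolGraph n) (hG : degSeq G = k) :
    Real.log (Pcan (pStar x) G) =
      ∑ ij ∈ Finset.univ.filter (fun ij : Fin n × Fin n => ij.1 < ij.2),
        (pStar x ij.1 ij.2 * Real.log (pStar x ij.1 ij.2) +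
          (1 - pStar x ij.1 ij.2) * Real.log (1 - pStar x ij.1 ij.2)) := by
  have hfactor : ∀ i j, (if G.1 i j then pStar x i j else 1 - pStar x i j) ≠ 0 := fun i j => by
    split_ifs
    exacts [(pStar_pos hxpos i j).ne', (one_sub_pStar_pos hxpos i j).ne']
  rw [Pcan, Real.log_prod fun ij _ => hfactor ij.1 ij.2]
  simp only [log_ite_eq_add_mul_log_sub, log_pStar_sub_log_one_sub_pStar hxpos, sum_add_distrib,
    add_eq_left]
  have hsymm : ∀ i j, ((if G.1 i j then 1 else 0) - pStar x i j : ℝ) =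
      (if G.1 j i then 1 else 0) - pStar x j i := fun i j => by rw [G.2.1 i j, pStar_comm]
  rw [sum_filter_lt_mul_add_eq_sum_mul_sum_ne _ hsymm fun i => Real.log (x i)]
  refine sum_eq_zero fun i _ => ?_
  rw [sum_sub_distrib, ← cast_degSeq, hfit i, hG, sub_self, mul_zero]
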